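/- With P_m a polynomial with positive coefficients and a_0 > 1, the map S on compactly supported functions defined by (Sx)(t) = x(t−a)/P_m(t−a) for t > a and 0 otherwise satisfies ‖Sx‖_p^p ≤ (1/a_0^p)‖x‖_p^p, TS = I, and S^n x → 0 in L^p as n → ∞ for every compactly supported x. -/

import Mathlib

/-! The bound `‖S y‖ ≤ a₀⁻¹ ‖y‖` holds because `S` is a translation to the right, which is an
isometry of `L^p(0, ∞)` once extended by zero, composed with division by `P ≥ a₀`.
Iterating, `‖Sⁿ x‖ ≤ a₀⁻ⁿ ‖x‖ → 0` since `a₀ > 1`. -/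

open MeasureTheory Filter Set

/-- The right-inverse map `S` for the polynomial weight:
`(Sx)(t) = x(t−a)/P(t−a)` for `t > a`, `0` otherwise. -/
noncomputable def Sshift (P : ℝ → ℝ) (a : ℝ) (x : ℝ → ℝ) : ℝ → ℝ :=
  fun t => if a < t then x (t - a) / P (t - a) else 0

theorem le_sum_mul_pow {c : ℕ → ℝ} {m : ℕ} (hc : ∀ i ≤ m, 0 ≤ c i) {t : ℝ} (ht : 0 ≤ t) :
    c 0 ≤ ∑ i ∈ Finset.range (m + 1), c i * t ^ i := by
  simpa using Finset.single_le_sum (f := fun i => c i * t ^ i)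
    (fun i hi => mul_nonneg (hc i (Nat.lt_succ_iff.mp (Finset.mem_range.mp hi))) (pow_nonneg ht i))
    (Finset.mem_range.mpr m.succ_pos)

theorem ENNReal.tendsto_iterate_nhds_zero_of_le_mul {α : Type*} {N : α → ENNReal} {S : α → α}
    {r : ENNReal} (hr : r < 1) (hS : ∀ y, N (S y) ≤ r * N y) {x : α} (hx : N x ≠ ⊤) :
    Tendsto (fun n => N (S^[n] x)) atTop (nhds 0) := by
  have h_iter : ∀ n, N (S^[n] x) ≤ r ^ n * N x := by
    intro n
    induction n with
    | zero => simp
    | succ n ih =>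
      rw [Function.iterate_succ_apply', pow_succ', mul_assoc]
      exact (hS _).trans (mul_le_mul_right ih r)
  have h_lim : Tendsto (fun n => r ^ n * N x) atTop (nhds 0) := by
    simpa using ENNReal.Tendsto.mul_const (ENNReal.tendsto_pow_atTop_nhds_zero_of_lt_one hr)
      (Or.inr hx)
  exact tendsto_of_tendsto_of_tendsto_of_le_of_le tendsto_const_nhds h_lim (fun _ => zero_le)
    h_iter

section Translation

variable {E : Type*} [NormedAddCommGroup E] {a : ℝ}

theorem measurePreserving_add_const_restrict_Ioi (a : ℝ) :
    MeasurePreserving (· + a) (volume.restrict (Ioi (0 : ℝ))) (volume.restrict (Ioi a)) := by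
  have h := (measurePreserving_add_right volume a).restrict_preimage (measurableSet_Ioi (a := a))
  rwa [preimage_add_const_Ioi, sub_self] at h

theorem restrict_Ioi_restrict_Ioi_eq_map_add_const (ha : 0 ≤ a) :
    (volume.restrict (Ioi (0 : ℝ))).restrict (Ioi a) =
      (volume.restrict (Ioi (0 : ℝ))).map (· + a) := by
  rw [(measurePreserving_add_const_restrict_Ioi a).map_eq, Measure.restrict_restrict
    measurableSet_Ioi, Ioi_inter_Ioi, max_eq_left ha]

theorem comp_sub_comp_add_const {β : Type*} (g : ℝ → β) (a : ℝ) : (fun t => g (t - a)) ∘ (· + a) = g := by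
  ext t
  simp

theorem eLpNorm_indicator_Ioi_comp_sub (ha : 0 ≤ a) (g : ℝ → E) (p : ENNReal) :
    eLpNorm ((Ioi a).indicator fun t => g (t - a)) p (volume.restrict (Ioi 0)) =
      eLpNorm g p (volume.restrict (Ioi 0)) := by
  rw [eLpNorm_indicator_eq_eLpNorm_restrict measurableSet_Ioi,
    restrict_Ioi_restrict_Ioi_eq_map_add_const ha,
    (measurableEmbedding_addRight a).eLpNorm_map_measure, comp_sub_comp_add_const]

theorem MeasureTheory.AEStronglyMeasurable.indicator_Ioi_comp_sub (ha : 0 ≤ a) {g : ℝ → E}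
    (hg : AEStronglyMeasurable g (volume.restrict (Ioi 0))) :
    AEStronglyMeasurable ((Ioi a).indicator fun t => g (t - a)) (volume.restrict (Ioi 0)) := by
  rw [aestronglyMeasurable_indicator_iff measurableSet_Ioi,
    restrict_Ioi_restrict_Ioi_eq_map_add_const ha,
    (measurableEmbedding_addRight a).aestronglyMeasurable_map_iff, comp_sub_comp_add_const]
  exact hg

end Translation

section Sshift

variable {P : ℝ → ℝ} {a c₀ : ℝ} {p : ENNReal} {x : ℝ → ℝ}

theorem Sshift_eq_indicator (P : ℝ → ℝ) (a : ℝ) (x : ℝ → ℝ) :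
    Sshift P a x = (Ioi a).indicator fun t => x (t - a) / P (t - a) := by
  ext t
  by_cases h : a < t <;> simp [Sshift, h]

theorem eLpNorm_div_le_of_le (hc₀ : 0 < c₀) (hP : ∀ s, 0 < s → c₀ ≤ P s) (y : ℝ → ℝ)
    (p : ENNReal) :
    eLpNorm (fun s => y s / P s) p (volume.restrict (Ioi 0)) ≤
      ENNReal.ofReal c₀⁻¹ * eLpNorm y p (volume.restrict (Ioi 0)) := by
  refine eLpNorm_le_mul_eLpNorm_of_ae_le_mul
    (ae_restrict_of_forall_mem measurableSet_Ioi fun s hs => ?_) p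
  rw [norm_div, ← div_eq_inv_mul]
  exact div_le_div_of_nonneg_left (norm_nonneg _) hc₀ ((hP s hs).trans (Real.le_norm_self _))

theorem eLpNorm_Sshift_le (ha : 0 ≤ a) (hc₀ : 0 < c₀) (hP : ∀ s, 0 < s → c₀ ≤ P s)
    (y : ℝ → ℝ) :
    eLpNorm (Sshift P a y) p (volume.restrict (Ioi 0)) ≤
      ENNReal.ofReal c₀⁻¹ * eLpNorm y p (volume.restrict (Ioi 0)) := by
  rw [Sshift_eq_indicator, eLpNorm_indicator_Ioi_comp_sub ha (fun s => y s / P s)]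
  exact eLpNorm_div_le_of_le hc₀ hP y p

theorem memLp_Sshift (ha : 0 ≤ a) (hc₀ : 0 < c₀) (hP : ∀ s, 0 < s → c₀ ≤ P s)
    (hPm : Measurable P) (hx : MemLp x p (volume.restrict (Ioi 0))) :
    MemLp (Sshift P a x) p (volume.restrict (Ioi 0)) := by
  refine ⟨?_, (eLpNorm_Sshift_le ha hc₀ hP x).trans_lt
    (ENNReal.mul_lt_top ENNReal.ofReal_lt_top hx.eLpNorm_lt_top)⟩
  rw [Sshift_eq_indicator]
  exact .indicator_Ioi_comp_sub ha (g := fun s => x s / P s) (hx.aestronglyMeasurable.mul hPm.inv.aestronglyMeasurable)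

theorem Sshift_eq_zero_of_le {R : ℝ} (hx : ∀ t, R ≤ t → x t = 0) {t : ℝ} (ht : R + a ≤ t) :
    Sshift P a x t = 0 := by
  by_cases h : a < t
  · simp [Sshift, h, hx (t - a) (by linarith)]
  · simp [Sshift, h]

theorem mul_Sshift_add {t : ℝ} (ht : 0 < t) (hPt : P t ≠ 0) :
    P t * Sshift P a x (t + a) = x t := by
  simp only [Sshift, lt_add_iff_pos_left, ht, if_true, add_sub_cancel_right]
  exact mul_div_cancel₀ _ hPt

end Sshift

theorem stmt14_general (p : ENNReal) (a : ℝ) (ha : 0 < a)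
    (m : ℕ) (c : ℕ → ℝ) (hc : ∀ i ≤ m, 0 < c i) (hc0 : 1 < c 0)
    (P : ℝ → ℝ) (hP : ∀ t : ℝ, P t = ∑ i ∈ Finset.range (m + 1), c i * t ^ i)
    (x : ℝ → ℝ) (hx : MemLp x p (volume.restrict (Set.Ioi (0:ℝ))))
    (hsupp : ∃ R : ℝ, ∀ t : ℝ, R ≤ t → x t = 0) :
    (∃ R' : ℝ, ∀ t : ℝ, R' ≤ t → Sshift P a x t = 0) ∧
    MemLp (Sshift P a x) p (volume.restrict (Set.Ioi (0:ℝ))) ∧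
    (eLpNorm (Sshift P a x) p (volume.restrict (Set.Ioi (0:ℝ))) ≤
      ENNReal.ofReal (c 0)⁻¹ * eLpNorm x p (volume.restrict (Set.Ioi (0:ℝ)))) ∧
    (∀ t : ℝ, 0 < t → P t * Sshift P a x (t + a) = x t) ∧
    Tendsto (fun n : ℕ => eLpNorm ((Sshift P a)^[n] x) p
      (volume.restrict (Set.Ioi (0:ℝ)))) atTop (nhds 0) := by
  have hc0_pos : 0 < c 0 := one_pos.trans hc0
  have hP_ge : ∀ s, 0 < s → c 0 ≤ P s := fun s hs =>
    hP s ▸ le_sum_mul_pow (fun i hi => (hc i hi).le) hs.le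
  have hP_meas : Measurable P := by
    rw [funext hP]
    fun_prop
  have hS : ∀ y, eLpNorm (Sshift P a y) p (volume.restrict (Ioi 0)) ≤
      ENNReal.ofReal (c 0)⁻¹ * eLpNorm y p (volume.restrict (Ioi 0)) :=
    eLpNorm_Sshift_le ha.le hc0_pos hP_ge
  have hr : ENNReal.ofReal (c 0)⁻¹ < 1 := by
    rwa [ENNReal.ofReal_lt_one, inv_lt_one₀ hc0_pos]
  obtain ⟨R, hR⟩ := hsupp
  exact ⟨⟨R + a, fun t => Sshift_eq_zero_of_le hR⟩, memLp_Sshift ha.le hc0_pos hP_ge hP_meas hx,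
    hS x, fun t ht => mul_Sshift_add ht (hc0_pos.trans_le (hP_ge t ht)).ne',
    ENNReal.tendsto_iterate_nhds_zero_of_le_mul hr hS hx.eLpNorm_ne_top⟩

/-- with `P_m(t) = a_m t^m + ⋯ + a_0`, all coefficients positive
and `a_0 > 1`, the map `S` on compactly supported `p`-integrable functions
satisfies `‖Sx‖_p^p ≤ a_0^{-p}‖x‖_p^p`, `TS = I` for `(Tx)(t) = P_m(t)x(t+a)`,
and `S^n x → 0` in `L^p(0,∞)`. -/
theorem stmt14 (p : ENNReal) [Fact (1 ≤ p)] (hp : p ≠ ⊤) (a : ℝ) (ha : 0 < a)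
    (m : ℕ) (hm : 1 ≤ m) (c : ℕ → ℝ) (hc : ∀ i ≤ m, 0 < c i) (hc0 : 1 < c 0)
    (P : ℝ → ℝ) (hP : ∀ t : ℝ, P t = ∑ i ∈ Finset.range (m + 1), c i * t ^ i)
    (x : ℝ → ℝ) (hx : MemLp x p (volume.restrict (Set.Ioi (0:ℝ))))
    (hsupp : ∃ R : ℝ, ∀ t : ℝ, R ≤ t → x t = 0) :
    (∃ R' : ℝ, ∀ t : ℝ, R' ≤ t → Sshift P a x t = 0) ∧
    MemLp (Sshift P a x) p (volume.restrict (Set.Ioi (0:ℝ))) ∧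
    (eLpNorm (Sshift P a x) p (volume.restrict (Set.Ioi (0:ℝ))) ≤
      ENNReal.ofReal (c 0)⁻¹ * eLpNorm x p (volume.restrict (Set.Ioi (0:ℝ)))) ∧
    (∀ t : ℝ, 0 < t → P t * Sshift P a x (t + a) = x t) ∧
    Tendsto (fun n : ℕ => eLpNorm ((Sshift P a)^[n] x) p
      (volume.restrict (Set.Ioi (0:ℝ)))) atTop (nhds 0) :=
  stmt14_general p a ha m c hc hc0 P hP x hx hsupp
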